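/- (Noncommutative Gauss equation) Let (C_A, h, ∇) and (C_{A'}, h', ∇') be pseudo-Riemannian calculi with (φ₀, ψ, ψ̂) an isometric embedding, and let δᵢ ∈ g', ∂ᵢ = ψ(δᵢ), Eᵢ = Ψ(δᵢ), Eᵢ' = φ'(δᵢ) for i = 1,2,3,4. Then φ₀(h(E₁, R(∂₃, ∂₄)E₂)) = h'(E₁', R'(δ₃, δ₄)E₂') + φ₀(h(α(δ₄, E₁), α(δ₃, E₂))) − φ₀(h(α(δ₃, E₁), α(δ₄, E₂))), where R and R' are the curvature operators of ∇ and ∇', and α is the second fundamental form. -/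

import Mathlib

open MulOpposite

attribute [local instance 100] LieRing.ofAssociativeRing

/-- A derivation of a (possibly noncommutative) unital `ℝ`-algebra `A`. -/
def IsDerivation {A : Type} [Ring A] [Algebra ℝ A] (d : Module.End ℝ A) : Prop :=
  ∀ a b : A, d (a * b) = d a * b + a * d b

/-- A real calculus `(A, g, M, φ)` over a unital `∗`-algebra `A`: a finite-dimensional real
Lie algebra `g` of derivations of `A`, a right `A`-module `M` (encoded as a module over
`Aᵐᵒᵖ`), and an `ℝ`-linear map `φ : g → M` whose image generates `M`. -/
structure RealCalculus (A : Type) [Ring A] [StarRing A] [Algebra ℝ A]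
    (M : Type) [AddCommGroup M] [Module ℝ M] [Module Aᵐᵒᵖ M]
    [IsScalarTower ℝ Aᵐᵒᵖ M] where
  g : LieSubalgebra ℝ (Module.End ℝ A)
  g_der : ∀ d ∈ g, IsDerivation d
  g_findim : FiniteDimensional ℝ g
  φ : g →ₗ[ℝ] M
  span_eq : Submodule.span Aᵐᵒᵖ (Set.range φ) = ⊤

/-- A hermitian form on a right `A`-module `M`. -/
structure IsHermitianForm (A : Type) [Ring A] [StarRing A]
    (M : Type) [AddCommGroup M] [Module Aᵐᵒᵖ M] (h : M → M → A) : Prop where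
  add_right : ∀ m n₁ n₂, h m (n₁ + n₂) = h m n₁ + h m n₂
  smul_right : ∀ m n (a : A), h m (op a • n) = h m n * a
  star_eq : ∀ m n, h m n = star (h n m)

/-- A real metric calculus: a real calculus together with a nondegenerate hermitian form `h`
for which `h(φ(∂₁), φ(∂₂))` is hermitian. -/
structure IsRealMetricCalculus {A : Type} [Ring A] [StarRing A] [Algebra ℝ A]
    {M : Type} [AddCommGroup M] [Module ℝ M] [Module Aᵐᵒᵖ M] [IsScalarTower ℝ Aᵐᵒᵖ M]
    (C : RealCalculus A M) (h : M → M → A) : Prop where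
  herm : IsHermitianForm A M h
  nondeg : ∀ m, (∀ n, h m n = 0) → m = 0
  real : ∀ d₁ d₂ : C.g, star (h (C.φ d₁) (C.φ d₂)) = h (C.φ d₁) (C.φ d₂)

section Hom

variable {A : Type} [Ring A] [StarRing A] [Algebra ℝ A]
  {M : Type} [AddCommGroup M] [Module ℝ M] [Module Aᵐᵒᵖ M] [IsScalarTower ℝ Aᵐᵒᵖ M]
  {A' : Type} [Ring A'] [StarRing A'] [Algebra ℝ A']
  {M' : Type} [AddCommGroup M'] [Module ℝ M'] [Module A'ᵐᵒᵖ M'] [IsScalarTower ℝ A'ᵐᵒᵖ M']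

/-- The submodule `M_Ψ` of `M` generated by `Ψ(g') = φ(ψ(g'))`. -/
def RealCalculus.MPsi (C : RealCalculus A M) (C' : RealCalculus A' M')
    (ψ : C'.g →ₗ⁅ℝ⁆ C.g) : Submodule Aᵐᵒᵖ M :=
  Submodule.span Aᵐᵒᵖ (Set.range fun δ : C'.g => C.φ (ψ δ))

/-- A real calculus homomorphism `(φ₀, ψ, ψ̂) : C_A → C_{A'}`. -/
structure RCHom (C : RealCalculus A M) (C' : RealCalculus A' M') where
  φ₀ : A →⋆ₐ[ℝ] A'
  ψ : C'.g →ₗ⁅ℝ⁆ C.g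
  compat : ∀ (δ : C'.g) (a : A),
    (δ : Module.End ℝ A') (φ₀ a) = φ₀ ((ψ δ : Module.End ℝ A) a)
  ψh : RealCalculus.MPsi C C' ψ →+ M'
  ψh_smul : ∀ (m : RealCalculus.MPsi C C' ψ) (a : A),
    ψh ⟨op a • (m : M), (RealCalculus.MPsi C C' ψ).smul_mem _ m.2⟩ = op (φ₀ a) • ψh m
  ψh_phi : ∀ δ : C'.g,
    ψh ⟨C.φ (ψ δ), Submodule.subset_span ⟨δ, rfl⟩⟩ = C'.φ δ

end Hom

section Conn

variable {A : Type} [Ring A] [StarRing A] [Algebra ℝ A]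
  {M : Type} [AddCommGroup M] [Module ℝ M] [Module Aᵐᵒᵖ M] [IsScalarTower ℝ Aᵐᵒᵖ M]

/-- An affine connection on `(M, g)`. -/
structure Connection (C : RealCalculus A M) where
  cov : C.g → M → M
  add_m : ∀ (d : C.g) (m n : M), cov d (m + n) = cov d m + cov d n
  smul_d : ∀ (r : ℝ) (d d' : C.g) (m : M), cov (r • d + d') m = r • cov d m + cov d' m
  leibniz : ∀ (d : C.g) (m : M) (a : A),
    cov d (op a • m) = op a • cov d m + op ((d : Module.End ℝ A) a) • m

variable {C : RealCalculus A M}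

def Connection.IsMetric (co : Connection C) (h : M → M → A) : Prop :=
  ∀ (d : C.g) (m n : M),
    (d : Module.End ℝ A) (h m n) = h (co.cov d m) n + h m (co.cov d n)

def Connection.IsTorsionFree (co : Connection C) : Prop :=
  ∀ d₁ d₂ : C.g, co.cov d₁ (C.φ d₂) - co.cov d₂ (C.φ d₁) = C.φ ⁅d₁, d₂⁆

def Connection.IsReal (co : Connection C) (h : M → M → A) : Prop :=
  ∀ d d₁ d₂ : C.g,
    star (h (co.cov d (C.φ d₁)) (C.φ d₂)) = h (co.cov d (C.φ d₁)) (C.φ d₂)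

/-- A pseudo-Riemannian calculus: a real metric calculus with a real, metric and
torsion-free (Levi-Civita) connection. -/
structure IsPseudoRiemannian (C : RealCalculus A M) (h : M → M → A)
    (co : Connection C) : Prop where
  metricCalc : IsRealMetricCalculus C h
  conn_real : co.IsReal h
  metric : co.IsMetric h
  torsionFree : co.IsTorsionFree

end Conn

section Emb

variable {A : Type} [Ring A] [StarRing A] [Algebra ℝ A]
  {M : Type} [AddCommGroup M] [Module ℝ M] [Module Aᵐᵒᵖ M] [IsScalarTower ℝ Aᵐᵒᵖ M]
  {A' : Type} [Ring A'] [StarRing A'] [Algebra ℝ A']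
  {M' : Type} [AddCommGroup M'] [Module ℝ M'] [Module A'ᵐᵒᵖ M'] [IsScalarTower ℝ A'ᵐᵒᵖ M']

/-- An isometric embedding of real metric calculi: a real metric calculus homomorphism
with `φ₀` surjective and `M = M_Ψ ⊕ M_Ψ^⊥`, recorded via the orthogonal projection `P`
onto `M_Ψ`. -/
structure IsometricEmbedding (C : RealCalculus A M) (C' : RealCalculus A' M')
    (h : M → M → A) (h' : M' → M' → A') extends RCHom C C' where
  surj : Function.Surjective φ₀
  P : M →ₗ[Aᵐᵒᵖ] M
  P_mem : ∀ m : M, P m ∈ RealCalculus.MPsi C C' ψ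
  P_id : ∀ m ∈ RealCalculus.MPsi C C' ψ, P m = m
  P_perp : ∀ m : M, ∀ n ∈ RealCalculus.MPsi C C' ψ, h (m - P m) n = 0
  isometry : ∀ δ₁ δ₂ : C'.g,
    h' (C'.φ δ₁) (C'.φ δ₂) = φ₀ (h (C.φ (ψ δ₁)) (C.φ (ψ δ₂)))

end Emb

section HermHelpers

variable {A : Type} [Ring A] [StarRing A]
  {M : Type} [AddCommGroup M] [Module Aᵐᵒᵖ M]
  {h : M → M → A}

lemma hf_zero_right (H : IsHermitianForm A M h) (m : M) : h m 0 = 0 := by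
  have := H.add_right m 0 0
  simp only [add_zero] at this
  exact left_eq_add.mp this

lemma hf_neg_right (H : IsHermitianForm A M h) (m n : M) : h m (-n) = - h m n := by
  have := H.add_right m n (-n)
  simp only [add_neg_cancel, hf_zero_right H] at this
  exact (neg_eq_of_add_eq_zero_right this.symm).symm

lemma hf_sub_right (H : IsHermitianForm A M h) (m n₁ n₂ : M) :
    h m (n₁ - n₂) = h m n₁ - h m n₂ := by
  rw [sub_eq_add_neg, H.add_right, hf_neg_right H, sub_eq_add_neg]

lemma hf_add_left (H : IsHermitianForm A M h) (m n k : M) :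
    h (m + n) k = h m k + h n k := by
  rw [H.star_eq, H.add_right, star_add, ← H.star_eq, ← H.star_eq]

lemma hf_zero_left (H : IsHermitianForm A M h) (m : M) : h 0 m = 0 := by
  rw [H.star_eq, hf_zero_right H, star_zero]

lemma hf_neg_left (H : IsHermitianForm A M h) (m n : M) : h (-m) n = - h m n := by
  rw [H.star_eq, hf_neg_right H, star_neg, ← H.star_eq]

lemma hf_sub_left (H : IsHermitianForm A M h) (m n k : M) :
    h (m - n) k = h m k - h n k := by
  rw [sub_eq_add_neg, hf_add_left H, hf_neg_left H, sub_eq_add_neg]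

end HermHelpers
section ConnHelpers

variable {A : Type} [Ring A] [StarRing A] [Algebra ℝ A]
  {M : Type} [AddCommGroup M] [Module ℝ M] [Module Aᵐᵒᵖ M] [IsScalarTower ℝ Aᵐᵒᵖ M]
  {C : RealCalculus A M} {h : M → M → A}

lemma conn_zero (co : Connection C) (d : C.g) : co.cov d 0 = 0 := by
  have := co.add_m d 0 0
  simp only [add_zero] at this
  exact left_eq_add.mp this

lemma conn_neg (co : Connection C) (d : C.g) (m : M) : co.cov d (-m) = - co.cov d m := by
  have := co.add_m d m (-m)
  simp only [add_neg_cancel, conn_zero] at this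
  exact (neg_eq_of_add_eq_zero_right this.symm).symm

lemma conn_sub (co : Connection C) (d : C.g) (m n : M) :
    co.cov d (m - n) = co.cov d m - co.cov d n := by
  rw [sub_eq_add_neg, co.add_m, conn_neg, sub_eq_add_neg]

/-- Flip a connection term through the hermitian form using the reality conditions. -/
lemma conn_flip {co : Connection C} (hPR : IsPseudoRiemannian C h co) (d d₁ d₂ : C.g) :
    h (C.φ d₂) (co.cov d (C.φ d₁)) = h (co.cov d (C.φ d₁)) (C.φ d₂) := by
  rw [hPR.metricCalc.herm.star_eq, hPR.conn_real]

/-- The noncommutative Koszul formula (doubled form). -/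
lemma koszul {co : Connection C} (hPR : IsPseudoRiemannian C h co) (d₁ d₂ d₃ : C.g) :
    h (co.cov d₁ (C.φ d₂)) (C.φ d₃) + h (co.cov d₁ (C.φ d₂)) (C.φ d₃) =
      (d₁ : Module.End ℝ A) (h (C.φ d₂) (C.φ d₃))
      + (d₂ : Module.End ℝ A) (h (C.φ d₁) (C.φ d₃))
      - (d₃ : Module.End ℝ A) (h (C.φ d₁) (C.φ d₂))
      + h (C.φ ⁅d₁, d₂⁆) (C.φ d₃)
      - h (C.φ ⁅d₁, d₃⁆) (C.φ d₂)
      - h (C.φ ⁅d₂, d₃⁆) (C.φ d₁) := by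
  have H := hPR.metricCalc.herm
  have tf : ∀ a b : C.g, co.cov b (C.φ a) = co.cov a (C.φ b) - C.φ ⁅a, b⁆ := by
    intro a b
    have := hPR.torsionFree a b
    rw [← this]; abel
  have E1 := hPR.metric d₁ (C.φ d₂) (C.φ d₃)
  have E2 := hPR.metric d₂ (C.φ d₁) (C.φ d₃)
  have E3 := hPR.metric d₃ (C.φ d₁) (C.φ d₂)
  rw [conn_flip hPR] at E1 E2 E3
  rw [E1, E2, E3]
  rw [tf d₁ d₂, tf d₁ d₃, tf d₂ d₃]
  rw [hf_sub_left H, hf_sub_left H, hf_sub_left H]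
  abel

/-- Halving in a real algebra. -/
lemma half_eq {B : Type} [AddCommGroup B] [Module ℝ B] {x y : B}
    (hxy : x + x = y + y) : x = y := by
  have h2 : (2 : ℝ) • x = (2 : ℝ) • y := by rw [two_smul, two_smul]; exact hxy
  have := congrArg (fun z => (2⁻¹ : ℝ) • z) h2
  simpa [smul_smul] using this

end ConnHelpers
section Cross

variable {A : Type} [Ring A] [StarRing A] [Algebra ℝ A]
  {M : Type} [AddCommGroup M] [Module ℝ M] [Module Aᵐᵒᵖ M] [IsScalarTower ℝ Aᵐᵒᵖ M]
  {A' : Type} [Ring A'] [StarRing A'] [Algebra ℝ A']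
  {M' : Type} [AddCommGroup M'] [Module ℝ M'] [Module A'ᵐᵒᵖ M'] [IsScalarTower ℝ A'ᵐᵒᵖ M']
  {C : RealCalculus A M} {C' : RealCalculus A' M'}
  {h : M → M → A} {h' : M' → M' → A'}
  {co : Connection C} {co' : Connection C'}

/-- L0: `φ₀` of the Koszul data transfers the connection pairing on generators. -/
lemma L0 (hPR : IsPseudoRiemannian C h co) (hPR' : IsPseudoRiemannian C' h' co')
    (F : IsometricEmbedding C C' h h') (δ ε η : C'.g) :
    F.φ₀ (h (co.cov (F.ψ δ) (C.φ (F.ψ ε))) (C.φ (F.ψ η))) =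
      h' (co'.cov δ (C'.φ ε)) (C'.φ η) := by
  apply half_eq
  have K := koszul hPR (F.ψ δ) (F.ψ ε) (F.ψ η)
  have K' := koszul hPR' δ ε η
  have lie : ∀ a b : C'.g, (⁅F.ψ a, F.ψ b⁆ : C.g) = F.ψ ⁅a, b⁆ := fun a b =>
    (F.ψ.map_lie a b).symm
  have iso : ∀ a b : C'.g, F.φ₀ (h (C.φ (F.ψ a)) (C.φ (F.ψ b))) = h' (C'.φ a) (C'.φ b) :=
    fun a b => (F.isometry a b).symm
  have der : ∀ (a : C'.g) (x : A),
      F.φ₀ (((F.ψ a : C.g) : Module.End ℝ A) x) = (a : Module.End ℝ A') (F.φ₀ x) :=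
    fun a x => (F.compat a x).symm
  calc F.φ₀ (h (co.cov (F.ψ δ) (C.φ (F.ψ ε))) (C.φ (F.ψ η)))
        + F.φ₀ (h (co.cov (F.ψ δ) (C.φ (F.ψ ε))) (C.φ (F.ψ η)))
      = F.φ₀ (h (co.cov (F.ψ δ) (C.φ (F.ψ ε))) (C.φ (F.ψ η))
          + h (co.cov (F.ψ δ) (C.φ (F.ψ ε))) (C.φ (F.ψ η))) := (map_add _ _ _).symm
    _ = h' (co'.cov δ (C'.φ ε)) (C'.φ η) + h' (co'.cov δ (C'.φ ε)) (C'.φ η) := by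
        rw [K, K']
        simp only [lie, map_add, map_sub, der, iso]

/-- L1: `φ₀ (h (Ψ η) m) = h' (φ' η) (ψ̂ m)` for `m ∈ M_Ψ`. -/
lemma L1 (H : IsHermitianForm A M h) (H' : IsHermitianForm A' M' h')
    (F : IsometricEmbedding C C' h h') (η : C'.g)
    (m : M) (hm : m ∈ RealCalculus.MPsi C C' F.ψ) :
    F.φ₀ (h (C.φ (F.ψ η)) m) = h' (C'.φ η) (F.ψh ⟨m, hm⟩) := by
  induction hm using Submodule.span_induction with
  | mem x hx =>
      obtain ⟨δ', rfl⟩ := hx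
      show F.φ₀ (h (C.φ (F.ψ η)) (C.φ (F.ψ δ'))) =
        h' (C'.φ η) (F.ψh ⟨C.φ (F.ψ δ'), Submodule.subset_span ⟨δ', rfl⟩⟩)
      rw [F.ψh_phi δ', ← F.isometry]
  | zero =>
      show F.φ₀ (h (C.φ (F.ψ η)) 0) = h' (C'.φ η) (F.ψh 0)
      rw [map_zero, hf_zero_right H, hf_zero_right H', map_zero]
  | add x y hx hy ihx ihy =>
      show F.φ₀ (h (C.φ (F.ψ η)) (x + y)) = h' (C'.φ η) (F.ψh (⟨x, hx⟩ + ⟨y, hy⟩))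
      rw [H.add_right, map_add, ihx, ihy, map_add F.ψh, H'.add_right]
  | smul c x hx ihx =>
      show F.φ₀ (h (C.φ (F.ψ η)) (op c.unop • x)) =
        h' (C'.φ η)
          (F.ψh ⟨op c.unop • x, (RealCalculus.MPsi C C' F.ψ).smul_mem _ hx⟩)
      rw [F.ψh_smul ⟨x, hx⟩ c.unop, H.smul_right, map_mul, ihx, H'.smul_right]

/-- L3: `φ₀ (h (Ψ η) (∇_{ψδ} m)) = h' (φ' η) (∇'_δ (ψ̂ m))` for `m ∈ M_Ψ`. -/
lemma L3 (hPR : IsPseudoRiemannian C h co) (hPR' : IsPseudoRiemannian C' h' co')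
    (F : IsometricEmbedding C C' h h') (η δ : C'.g)
    (m : M) (hm : m ∈ RealCalculus.MPsi C C' F.ψ) :
    F.φ₀ (h (C.φ (F.ψ η)) (co.cov (F.ψ δ) m)) =
      h' (C'.φ η) (co'.cov δ (F.ψh ⟨m, hm⟩)) := by
  have H := hPR.metricCalc.herm
  have H' := hPR'.metricCalc.herm
  induction hm using Submodule.span_induction with
  | mem x hx =>
      obtain ⟨ε, rfl⟩ := hx
      show F.φ₀ (h (C.φ (F.ψ η)) (co.cov (F.ψ δ) (C.φ (F.ψ ε)))) =
        h' (C'.φ η) (co'.cov δ (F.ψh ⟨C.φ (F.ψ ε), Submodule.subset_span ⟨ε, rfl⟩⟩))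
      rw [F.ψh_phi ε]
      rw [H.star_eq, hPR.conn_real, L0 hPR hPR' F δ ε η, ← hPR'.conn_real,
        ← H'.star_eq]
  | zero =>
      show F.φ₀ (h (C.φ (F.ψ η)) (co.cov (F.ψ δ) 0)) =
        h' (C'.φ η) (co'.cov δ (F.ψh 0))
      rw [map_zero, conn_zero, conn_zero, hf_zero_right H, hf_zero_right H', map_zero]
  | add x y hx hy ihx ihy =>
      show F.φ₀ (h (C.φ (F.ψ η)) (co.cov (F.ψ δ) (x + y))) =
        h' (C'.φ η) (co'.cov δ (F.ψh (⟨x, hx⟩ + ⟨y, hy⟩)))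
      rw [co.add_m, H.add_right, map_add, ihx, ihy, map_add F.ψh, co'.add_m,
        H'.add_right]
  | smul c x hx ihx =>
      show F.φ₀ (h (C.φ (F.ψ η)) (co.cov (F.ψ δ) (op c.unop • x))) =
        h' (C'.φ η)
          (co'.cov δ (F.ψh ⟨op c.unop • x, (RealCalculus.MPsi C C' F.ψ).smul_mem _ hx⟩))
      rw [F.ψh_smul ⟨x, hx⟩ c.unop, co.leibniz, co'.leibniz, H.add_right, H.smul_right,
        H.smul_right, H'.add_right, H'.smul_right, H'.smul_right, map_add, map_mul,
        map_mul, ihx, ← F.compat δ c.unop, L1 H H' F η x hx]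

end Cross
section Cross2

variable {A : Type} [Ring A] [StarRing A] [Algebra ℝ A]
  {M : Type} [AddCommGroup M] [Module ℝ M] [Module Aᵐᵒᵖ M] [IsScalarTower ℝ Aᵐᵒᵖ M]
  {A' : Type} [Ring A'] [StarRing A'] [Algebra ℝ A']
  {M' : Type} [AddCommGroup M'] [Module ℝ M'] [Module A'ᵐᵒᵖ M'] [IsScalarTower ℝ A'ᵐᵒᵖ M']
  {C : RealCalculus A M} {C' : RealCalculus A' M'}
  {h : M → M → A} {h' : M' → M' → A'}
  {co : Connection C} {co' : Connection C'}

/-- Orthogonality in the second argument: `h n (m - P m) = 0` for `n ∈ M_Ψ`. -/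
lemma perp_right (H : IsHermitianForm A M h) (F : IsometricEmbedding C C' h h')
    (m : M) (n : M) (hn : n ∈ RealCalculus.MPsi C C' F.ψ) :
    h n (m - F.P m) = 0 := by
  rw [H.star_eq, F.P_perp m n hn, star_zero]

/-- L2: `ψ̂ (P (∇_{ψδ} m)) = ∇'_δ (ψ̂ m)` for `m ∈ M_Ψ`. -/
lemma L2 (hPR : IsPseudoRiemannian C h co) (hPR' : IsPseudoRiemannian C' h' co')
    (F : IsometricEmbedding C C' h h') (δ : C'.g)
    (m : M) (hm : m ∈ RealCalculus.MPsi C C' F.ψ) :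
    F.ψh ⟨F.P (co.cov (F.ψ δ) m), F.P_mem _⟩ = co'.cov δ (F.ψh ⟨m, hm⟩) := by
  have H := hPR.metricCalc.herm
  have H' := hPR'.metricCalc.herm
  set x := F.ψh ⟨F.P (co.cov (F.ψ δ) m), F.P_mem _⟩ with hxdef
  set y := co'.cov δ (F.ψh ⟨m, hm⟩) with hydef
  have key : ∀ η : C'.g, h' (C'.φ η) x = h' (C'.φ η) y := by
    intro η
    have e1 : h' (C'.φ η) x =
        F.φ₀ (h (C.φ (F.ψ η)) (F.P (co.cov (F.ψ δ) m))) :=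
      (L1 H H' F η _ (F.P_mem _)).symm
    have e2 : h (C.φ (F.ψ η)) (F.P (co.cov (F.ψ δ) m)) =
        h (C.φ (F.ψ η)) (co.cov (F.ψ δ) m) := by
      have hsplit : co.cov (F.ψ δ) m =
          F.P (co.cov (F.ψ δ) m) + (co.cov (F.ψ δ) m - F.P (co.cov (F.ψ δ) m)) := by
        abel
      conv_rhs => rw [hsplit]
      rw [H.add_right, perp_right H F _ _ (Submodule.subset_span ⟨η, rfl⟩), add_zero]
    rw [e1, e2, L3 hPR hPR' F η δ m hm]
  have keysub : ∀ n : M', h' (x - y) n = 0 := by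
    intro n
    have hn : n ∈ Submodule.span A'ᵐᵒᵖ (Set.range C'.φ) := by
      rw [C'.span_eq]; trivial
    induction hn using Submodule.span_induction with
    | mem z hz =>
        obtain ⟨η, rfl⟩ := hz
        rw [H'.star_eq, hf_sub_right H' (C'.φ η) x y, key η, sub_self, star_zero]
    | zero => exact hf_zero_right H' _
    | add a b _ _ iha ihb => rw [H'.add_right, iha, ihb, add_zero]
    | smul c z _ ihz =>
        have hc : c = op c.unop := rfl
        rw [hc, H'.smul_right, ihz, zero_mul]
  have := hPR'.metricCalc.nondeg (x - y) keysub
  exact sub_eq_zero.mp this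

end Cross2

/-- Noncommutative Gauss equation: for an isometric embedding of
pseudo-Riemannian calculi, with `Eᵢ = Ψ(δᵢ)`, `Eᵢ' = φ'(δᵢ)`, curvature operators
`R`, `R'` and second fundamental form `α`,
`φ₀(h(E₁, R(∂₃, ∂₄)E₂)) = h'(E₁', R'(δ₃, δ₄)E₂') + φ₀(h(α(δ₄, E₁), α(δ₃, E₂)))
  − φ₀(h(α(δ₃, E₁), α(δ₄, E₂)))`. -/
theorem stmt11 {A : Type} [Ring A] [StarRing A] [Algebra ℝ A]
    {M : Type} [AddCommGroup M] [Module ℝ M] [Module Aᵐᵒᵖ M] [IsScalarTower ℝ Aᵐᵒᵖ M]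
    {A' : Type} [Ring A'] [StarRing A'] [Algebra ℝ A']
    {M' : Type} [AddCommGroup M'] [Module ℝ M'] [Module A'ᵐᵒᵖ M']
    [IsScalarTower ℝ A'ᵐᵒᵖ M']
    {C : RealCalculus A M} {C' : RealCalculus A' M'}
    (h : M → M → A) (h' : M' → M' → A')
    (co : Connection C) (co' : Connection C')
    (hPR : IsPseudoRiemannian C h co) (hPR' : IsPseudoRiemannian C' h' co')
    (F : IsometricEmbedding C C' h h')
    (δ₁ δ₂ δ₃ δ₄ : C'.g) :
    -- curvature of co
    (fun (R : C.g → C.g → M → M) (R' : C'.g → C'.g → M' → M')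
         (α : C'.g → M → M) =>
      F.φ₀ (h (C.φ (F.ψ δ₁)) (R (F.ψ δ₃) (F.ψ δ₄) (C.φ (F.ψ δ₂)))) =
        h' (C'.φ δ₁) (R' δ₃ δ₄ (C'.φ δ₂)) +
        F.φ₀ (h (α δ₄ (C.φ (F.ψ δ₁))) (α δ₃ (C.φ (F.ψ δ₂)))) -
        F.φ₀ (h (α δ₃ (C.φ (F.ψ δ₁))) (α δ₄ (C.φ (F.ψ δ₂)))))
      (fun d₃ d₄ m => co.cov d₃ (co.cov d₄ m) - co.cov d₄ (co.cov d₃ m)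
        - co.cov ⁅d₃, d₄⁆ m)
      (fun e₃ e₄ m' => co'.cov e₃ (co'.cov e₄ m') - co'.cov e₄ (co'.cov e₃ m')
        - co'.cov ⁅e₃, e₄⁆ m')
      (fun δ m => co.cov (F.ψ δ) m - F.P (co.cov (F.ψ δ) m)) := by
  
  have H := hPR.metricCalc.herm
  have H' := hPR'.metricCalc.herm
  dsimp only
  have mem₁ : C.φ (F.ψ δ₁) ∈ RealCalculus.MPsi C C' F.ψ :=
    Submodule.subset_span ⟨δ₁, rfl⟩
  have mem₂ : C.φ (F.ψ δ₂) ∈ RealCalculus.MPsi C C' F.ψ :=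
    Submodule.subset_span ⟨δ₂, rfl⟩
  have step : ∀ δa δb : C'.g,
      F.φ₀ (h (C.φ (F.ψ δ₁)) (co.cov (F.ψ δa) (co.cov (F.ψ δb) (C.φ (F.ψ δ₂))))) =
        h' (C'.φ δ₁) (co'.cov δa (co'.cov δb (C'.φ δ₂)))
        - F.φ₀ (h (co.cov (F.ψ δa) (C.φ (F.ψ δ₁))
                    - F.P (co.cov (F.ψ δa) (C.φ (F.ψ δ₁))))
                  (co.cov (F.ψ δb) (C.φ (F.ψ δ₂))
                    - F.P (co.cov (F.ψ δb) (C.φ (F.ψ δ₂))))) := by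
    intro δa δb
    set X := co.cov (F.ψ δb) (C.φ (F.ψ δ₂)) with hX
    have hsplit : X = F.P X + (X - F.P X) := by abel
    have t1 : F.φ₀ (h (C.φ (F.ψ δ₁)) (co.cov (F.ψ δa) (F.P X))) =
        h' (C'.φ δ₁) (co'.cov δa (co'.cov δb (C'.φ δ₂))) := by
      rw [L3 hPR hPR' F δ₁ δa _ (F.P_mem X)]
      congr 1
      have := L2 hPR hPR' F δb (C.φ (F.ψ δ₂)) mem₂
      rw [F.ψh_phi δ₂] at this
      rw [← this]
    have hperp0 : h (C.φ (F.ψ δ₁)) (X - F.P X) = 0 := perp_right H F X _ mem₁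
    have t2 : h (C.φ (F.ψ δ₁)) (co.cov (F.ψ δa) (X - F.P X)) =
        - h (co.cov (F.ψ δa) (C.φ (F.ψ δ₁)) - F.P (co.cov (F.ψ δa) (C.φ (F.ψ δ₁))))
            (X - F.P X) := by
      have hm := hPR.metric (F.ψ δa) (C.φ (F.ψ δ₁)) (X - F.P X)
      rw [hperp0, map_zero] at hm
      have hsplit1 : co.cov (F.ψ δa) (C.φ (F.ψ δ₁)) =
          F.P (co.cov (F.ψ δa) (C.φ (F.ψ δ₁)))
          + (co.cov (F.ψ δa) (C.φ (F.ψ δ₁))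
              - F.P (co.cov (F.ψ δa) (C.φ (F.ψ δ₁)))) := by abel
      conv at hm => rw [hsplit1]
      rw [hf_add_left H, perp_right H F X _ (F.P_mem _), zero_add] at hm
      exact eq_neg_of_add_eq_zero_right hm.symm
    have expand : co.cov (F.ψ δa) X =
        co.cov (F.ψ δa) (F.P X) + co.cov (F.ψ δa) (X - F.P X) := by
      conv_lhs => rw [hsplit]
      rw [co.add_m]
    rw [expand, H.add_right, map_add, t1, t2, map_neg, ← sub_eq_add_neg]
  have hbr : (⁅F.ψ δ₃, F.ψ δ₄⁆ : C.g) = F.ψ ⁅δ₃, δ₄⁆ := (F.ψ.map_lie δ₃ δ₄).symm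
  have stepbr : F.φ₀ (h (C.φ (F.ψ δ₁)) (co.cov ⁅F.ψ δ₃, F.ψ δ₄⁆ (C.φ (F.ψ δ₂)))) =
      h' (C'.φ δ₁) (co'.cov ⁅δ₃, δ₄⁆ (C'.φ δ₂)) := by
    rw [hbr]
    have := L3 hPR hPR' F δ₁ ⁅δ₃, δ₄⁆ (C.φ (F.ψ δ₂)) mem₂
    rw [F.ψh_phi δ₂] at this
    exact this
  rw [hf_sub_right H, hf_sub_right H, map_sub, map_sub, step δ₃ δ₄, step δ₄ δ₃, stepbr,
    hf_sub_right H', hf_sub_right H']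
  abel
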